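/- Let T be a directed tree such that the set Chi(u) of children of u is countably infinite for every u ∈ V, and let λ = {λ_v}_{v∈V°} be a family of positive real numbers such that the weighted shift S_λ is densely defined and (Σ_{w∈Chi(v)} λ_w²) · λ_v² = 1 for every v ∈ V°. Then D(S_λ*) ⊄ D(S_λ). -/

import Mathlib

open scoped ENNReal NNReal Classical

noncomputable section

/-- A directed tree: a directed graph with nonempty vertex set in which each vertex has
at most one parent, there are no circuits, and the underlying undirected graph is
connected and has no cycles (i.e. is a tree). -/
structure DirectedTree (V : Type) where
  edge : V → V → Prop
  nonempty : Nonempty V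
  antisymm : ∀ u v : V, edge u v → ¬ edge v u
  parent_unique : ∀ u v w : V, edge u w → edge v w → u = v
  isTree : (SimpleGraph.fromRel edge).IsTree

namespace DirectedTree

variable {V : Type} (T : DirectedTree V)

/-- The set of children of a vertex. -/
def chi (u : V) : Set V := {v | T.edge u v}

/-- `v` has a parent. -/
def HasParent (v : V) : Prop := ∃ u, T.edge u v

/-- `V⁰`: the set of non-root vertices, i.e. the vertices possessing a parent. -/
def Vcirc : Set V := {v | T.HasParent v}

/-- The tree is leafless if every vertex has a child. -/
def Leafless : Prop := ∀ u : V, (T.chi u).Nonempty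

/-- The parent of a vertex (junk value if the vertex is a root). -/
def par (v : V) : V := if h : T.HasParent v then h.choose else T.nonempty.some

/-- The set of descendants of a vertex. -/
def desc (u : V) : Set V := {w | Relation.ReflTransGen T.edge u w}

/-- The formal weighted shift map `Λ_T` acting on all complex functions on `V`. -/
def Lam (lam : V → ℂ) (f : V → ℂ) : V → ℂ :=
  fun v => if T.HasParent v then lam v * f (T.par v) else 0

/-- The domain of the weighted shift `S_λ`. -/
def domain (lam : V → ℂ) : Set (lp (fun _ : V => ℂ) 2) :=
  {f | Memℓp (T.Lam lam ⇑f) 2}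

/-- The weighted shift `S_λ` (extended by `0` outside its domain). -/
def shift (lam : V → ℂ) (f : lp (fun _ : V => ℂ) 2) : lp (fun _ : V => ℂ) 2 :=
  if h : f ∈ T.domain lam then (⟨T.Lam lam ⇑f, h⟩ : lp (fun _ : V => ℂ) 2) else 0

/-- The domain of `S_λ²`. -/
def squareDomain (lam : V → ℂ) : Set (lp (fun _ : V => ℂ) 2) :=
  {f | f ∈ T.domain lam ∧ T.shift lam f ∈ T.domain lam}

/-- The domain of the adjoint `S_λ*`. -/
def adjDomain (lam : V → ℂ) : Set (lp (fun _ : V => ℂ) 2) :=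
  {g | ∃ h : lp (fun _ : V => ℂ) 2,
    ∀ f ∈ T.domain lam, (inner ℂ (T.shift lam f) g : ℂ) = inner ℂ f h}

/-- `S_λ` is hyponormal: it is densely defined, `D(S_λ) ⊆ D(S_λ*)` and
`‖S_λ* f‖ ≤ ‖S_λ f‖` for every `f ∈ D(S_λ)` (the adjoint value at `f` being any vector
`h` satisfying `⟪S_λ g, f⟫ = ⟪g, h⟫` for all `g ∈ D(S_λ)`; it is unique by density). -/
def IsHyponormal (lam : V → ℂ) : Prop :=
  Dense (T.domain lam) ∧ T.domain lam ⊆ T.adjDomain lam ∧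
    ∀ f ∈ T.domain lam, ∀ h : lp (fun _ : V => ℂ) 2,
      (∀ g ∈ T.domain lam, (inner ℂ (T.shift lam g) f : ℂ) = inner ℂ g h) →
        ‖h‖ ≤ ‖T.shift lam f‖

/-- `ζ_u = (Σ_{v ∈ Chi(u)} |λ_v|²)^{1/2} ∈ [0,∞]`. -/
def zeta (lam : V → ℂ) (u : V) : ℝ≥0∞ :=
  (∑' v : T.chi u, ((‖lam (v : V)‖₊ : ℝ≥0∞)) ^ 2) ^ (1/2 : ℝ)

end DirectedTree

/-!
Pick a non-root vertex `u` and let `g = λ` on `Chi(u)` and `0` elsewhere. The condition at `u`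
gives `Σ_{w ∈ Chi(u)} λ_w² = λ_u⁻² < ∞`, so `g ∈ ℓ²`. For `f ∈ D(S_λ)` the pairing
`⟪S_λ f, g⟫ = conj (f u) · Σ_{w ∈ Chi(u)} conj (λ_w) g(w)` only sees `f(u)`, hence `g ∈ D(S_λ*)`
with `S_λ* g` a multiple of `e_u`. On the other hand
`‖Λ g‖² ≥ Σ_{w ∈ Chi(u)} λ_w² Σ_{v ∈ Chi(w)} λ_v² = Σ_{w ∈ Chi(u)} 1 = ∞`,
because `Chi(u)` is infinite, so `g ∉ D(S_λ)`.
-/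

theorem memℓp_two_iff_tsum_nnnorm_sq_ne_top {α : Type*} {E : α → Type*}
    [∀ i, NormedAddCommGroup (E i)] {f : ∀ i, E i} :
    Memℓp f 2 ↔ ∑' i, (‖f i‖₊ : ℝ≥0∞) ^ 2 ≠ ⊤ := by
  rw [memℓp_gen_iff (by norm_num)]
  have hnorm : (fun i => ‖f i‖ ^ (2 : ℝ≥0∞).toReal) = fun i => ((‖f i‖₊ ^ 2 : ℝ≥0) : ℝ) := by
    funext i
    norm_num
  rw [hnorm, NNReal.summable_coe, ← ENNReal.tsum_coe_ne_top_iff_summable]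
  push_cast
  rfl

theorem memℓp_two_indicator_iff {α : Type*} {E : Type*} [NormedAddCommGroup E]
    (s : Set α) (f : α → E) :
    Memℓp (s.indicator f) 2 ↔ ∑' i : s, (‖f i‖₊ : ℝ≥0∞) ^ 2 ≠ ⊤ := by
  have hind : (fun i => (‖s.indicator f i‖₊ : ℝ≥0∞) ^ 2)
      = s.indicator (fun i => (‖f i‖₊ : ℝ≥0∞) ^ 2) := by
    funext i
    by_cases hi : i ∈ s <;> simp [hi]
  rw [memℓp_two_iff_tsum_nnnorm_sq_ne_top, hind, ← tsum_subtype]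

namespace DirectedTree

variable {V : Type} (T : DirectedTree V)

theorem par_eq_of_edge {u v : V} (huv : T.edge u v) : T.par v = u := by
  have hv : T.HasParent v := ⟨u, huv⟩
  rw [par, dif_pos hv]
  exact T.parent_unique _ _ _ hv.choose_spec huv

theorem Lam_apply_of_edge (lam f : V → ℂ) {u v : V} (huv : T.edge u v) :
    T.Lam lam f v = lam v * f u := by
  rw [Lam, if_pos ⟨u, huv⟩, T.par_eq_of_edge huv]

theorem shift_apply_of_mem_domain {lam : V → ℂ} {f : lp (fun _ : V => ℂ) 2}
    (hf : f ∈ T.domain lam) (v : V) : T.shift lam f v = T.Lam lam f v := by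
  rw [shift, dif_pos hf]

theorem mem_adjDomain_of_support_subset_chi (lam : V → ℂ) (u : V)
    (g : lp (fun _ : V => ℂ) 2) (hg : Function.support g ⊆ T.chi u) :
    g ∈ T.adjDomain lam := by
  set c : ℂ := ∑' w : T.chi u, starRingEnd ℂ (lam w) * g w
  refine ⟨lp.single 2 u c, fun f hf => ?_⟩
  rw [lp.inner_single_right, lp.inner_eq_tsum]
  simp only [RCLike.inner_apply', T.shift_apply_of_mem_domain hf]
  have hsupp : Function.support (fun v => starRingEnd ℂ (T.Lam lam f v) * g v) ⊆ T.chi u :=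
    (Function.support_mul_subset_right _ _).trans hg
  have hchild : ∀ w : T.chi u, starRingEnd ℂ (T.Lam lam f w) * g w
      = starRingEnd ℂ (f u) * (starRingEnd ℂ (lam w) * g w) := by
    intro w
    rw [T.Lam_apply_of_edge lam f w.2, map_mul]
    ring
  rw [← tsum_subtype_eq_of_support_subset hsupp, tsum_congr hchild, tsum_mul_left]

/-- The children sets `Chi(w)` are pairwise disjoint, so summing over them undercounts `V`. -/
theorem tsum_nnnorm_sq_mul_le_tsum_nnnorm_Lam_sq (lam f : V → ℂ) :
    ∑' w, (‖f w‖₊ : ℝ≥0∞) ^ 2 * ∑' v : T.chi w, (‖lam v‖₊ : ℝ≥0∞) ^ 2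
      ≤ ∑' v, (‖T.Lam lam f v‖₊ : ℝ≥0∞) ^ 2 := by
  have hinj : Function.Injective (fun x : Σ w, T.chi w => (x.2 : V)) := by
    rintro ⟨w₁, v₁, hv₁⟩ ⟨w₂, v₂, hv₂⟩ (rfl : v₁ = v₂)
    obtain rfl : w₁ = w₂ := T.parent_unique _ _ _ hv₁ hv₂
    rfl
  have hchild : ∀ w (v : T.chi w), (‖T.Lam lam f v‖₊ : ℝ≥0∞) ^ 2
      = (‖f w‖₊ : ℝ≥0∞) ^ 2 * (‖lam v‖₊ : ℝ≥0∞) ^ 2 := by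
    intro w v
    rw [T.Lam_apply_of_edge lam f v.2, nnnorm_mul]
    push_cast
    ring
  calc ∑' w, (‖f w‖₊ : ℝ≥0∞) ^ 2 * ∑' v : T.chi w, (‖lam v‖₊ : ℝ≥0∞) ^ 2
      = ∑' x : Σ w, T.chi w, (‖T.Lam lam f x.2‖₊ : ℝ≥0∞) ^ 2 := by
        simp only [ENNReal.tsum_sigma', hchild, ENNReal.tsum_mul_left]
    _ ≤ ∑' v, (‖T.Lam lam f v‖₊ : ℝ≥0∞) ^ 2 :=
        ENNReal.tsum_comp_le_tsum_of_injective hinj _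

theorem not_memℓp_Lam_indicator_chi (lam : V → ℂ) (u : V) (hinf : (T.chi u).Infinite)
    (heq : ∀ w ∈ T.chi u,
      (∑' v : T.chi w, (‖lam v‖₊ : ℝ≥0∞) ^ 2) * (‖lam w‖₊ : ℝ≥0∞) ^ 2 = 1) :
    ¬ Memℓp (T.Lam lam ((T.chi u).indicator lam)) 2 := by
  have : Infinite (T.chi u) := hinf.to_subtype
  have hterm : (fun w => (‖(T.chi u).indicator lam w‖₊ : ℝ≥0∞) ^ 2
      * ∑' v : T.chi w, (‖lam v‖₊ : ℝ≥0∞) ^ 2) = (T.chi u).indicator 1 := by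
    funext w
    by_cases hw : w ∈ T.chi u
    · simp only [Set.indicator_of_mem hw, Pi.one_apply, mul_comm _ (∑' _, _), heq w hw]
    · simp [hw]
  rw [memℓp_two_iff_tsum_nnnorm_sq_ne_top, not_not, ← top_le_iff]
  calc (⊤ : ℝ≥0∞) = ∑' _ : T.chi u, 1 := (ENNReal.tsum_const_eq_top_of_ne_zero one_ne_zero).symm
    _ = ∑' w, (‖(T.chi u).indicator lam w‖₊ : ℝ≥0∞) ^ 2
          * ∑' v : T.chi w, (‖lam v‖₊ : ℝ≥0∞) ^ 2 := by rw [hterm]; exact tsum_subtype _ 1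
    _ ≤ _ := T.tsum_nnnorm_sq_mul_le_tsum_nnnorm_Lam_sq lam _

end DirectedTree

theorem stmt18_general {V : Type} (T : DirectedTree V)
    (h : ∀ u : V, (T.chi u).Countable ∧ (T.chi u).Infinite)
    (lam : V → ℂ)
    (heq : ∀ v ∈ T.Vcirc,
      (∑' w : T.chi v, (‖lam (w:V)‖₊ : ℝ≥0∞) ^ 2) * (‖lam v‖₊ : ℝ≥0∞) ^ 2 = 1) :
    ¬ (T.adjDomain lam ⊆ T.domain lam) := by
  obtain ⟨r⟩ := T.nonempty
  obtain ⟨u, hu⟩ := (h r).2.nonempty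
  have hsum : ∑' w : T.chi u, (‖lam w‖₊ : ℝ≥0∞) ^ 2 ≠ ⊤ := by
    have hu1 := heq u ⟨r, hu⟩
    rw [ENNReal.eq_inv_of_mul_eq_one_left hu1]
    exact ENNReal.inv_ne_top.2 (right_ne_zero_of_mul_eq_one hu1)
  let g : lp (fun _ : V => ℂ) 2 :=
    ⟨(T.chi u).indicator lam, (memℓp_two_indicator_iff _ _).2 hsum⟩
  have hg_adj : g ∈ T.adjDomain lam :=
    T.mem_adjDomain_of_support_subset_chi lam u g Set.support_indicator_subset
  have hg_dom : g ∉ T.domain lam :=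
    T.not_memℓp_Lam_indicator_chi lam u (h u).2 fun w hw => heq w ⟨u, hw⟩
  exact fun hsub => hg_dom (hsub hg_adj)

/-- Remark 4.3: if every vertex has countably infinitely many children and
`λ = {λ_v}_{v∈V⁰}` is a family of positive reals with `S_λ` densely defined and
`(Σ_{w∈Chi(v)} λ_w²) λ_v² = 1` for all `v ∈ V⁰`, then `D(S_λ*) ⊄ D(S_λ)`. -/
theorem stmt18 {V : Type} (T : DirectedTree V)
    (h : ∀ u : V, (T.chi u).Countable ∧ (T.chi u).Infinite)
    (lam : V → ℂ) (hpos : ∀ v ∈ T.Vcirc, ∃ r : ℝ, 0 < r ∧ lam v = (r : ℂ))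
    (hdense : Dense (T.domain lam))
    (heq : ∀ v ∈ T.Vcirc,
      (∑' w : T.chi v, (‖lam (w:V)‖₊ : ℝ≥0∞) ^ 2) * (‖lam v‖₊ : ℝ≥0∞) ^ 2 = 1) :
    ¬ (T.adjDomain lam ⊆ T.domain lam) :=
  stmt18_general T h lam heq
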